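/- arXiv:1907.03265 — 5 statements merged into one kernel-verified Lean document; each statement's English description precedes it below -/
import Mathlib

section
/- Soundness of TDS: for every formula φ of L_TDS, if φ is a theorem of the Hilbert system TDS (i.e., ⊢_TDS φ), then φ is valid on every TDS-model (it holds at every world of every TDS-model). -/
/-! # Temporal Deontic STIT logic (TDS) — common definitions -/

/-- Formulas of the language L_TDS over a set `Ag` of agents, with propositional
variables indexed by `ℕ`. -/
inductive Formula (Ag : Type) : Type
  | var : ℕ → Formula Ag
  | neg : Formula Ag → Formula Ag
  | and : Formula Ag → Formula Ag → Formula Ag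
  | box : Formula Ag → Formula Ag            -- □
  | agent : Ag → Formula Ag → Formula Ag     -- [i]
  | coal : Formula Ag → Formula Ag           -- [Ag]
  | G : Formula Ag → Formula Ag
  | H : Formula Ag → Formula Ag
  | obl : Ag → Formula Ag → Formula Ag       -- ⊗_i

namespace Formula

variable {Ag : Type}

def impl (φ ψ : Formula Ag) : Formula Ag := neg (and φ (neg ψ))
def orf (φ ψ : Formula Ag) : Formula Ag := neg (and (neg φ) (neg ψ))
def diam (φ : Formula Ag) : Formula Ag := neg (box (neg φ))              -- ◇
def diamAg (i : Ag) (φ : Formula Ag) : Formula Ag := neg (agent i (neg φ)) -- ⟨i⟩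
def diamCoal (φ : Formula Ag) : Formula Ag := neg (coal (neg φ))         -- ⟨Ag⟩
def F (φ : Formula Ag) : Formula Ag := neg (G (neg φ))
def P (φ : Formula Ag) : Formula Ag := neg (H (neg φ))
def perm (i : Ag) (φ : Formula Ag) : Formula Ag := neg (obl i (neg φ))   -- ⊖_i
def bot : Formula Ag := and (var 0) (neg (var 0))
def verum : Formula Ag := neg bot

/-- name(p) := □¬p ∧ □(Gp ∧ Hp) -/
def nameF (p : ℕ) : Formula Ag :=
  and (box (neg (var p))) (box (and (G (var p)) (H (var p))))

/-- The propositional variable `p` occurs in the formula. -/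
def occurs (p : ℕ) : Formula Ag → Prop
  | var q => p = q
  | neg φ => occurs p φ
  | and φ ψ => occurs p φ ∨ occurs p ψ
  | box φ => occurs p φ
  | agent _ φ => occurs p φ
  | coal φ => occurs p φ
  | G φ => occurs p φ
  | H φ => occurs p φ
  | obl _ φ => occurs p φ

/-- Propositional (Boolean) evaluation of a formula, treating every formula whose
main connective is not `neg` or `and` as an atom valued by `v`. -/
def evalProp (v : Formula Ag → Bool) : Formula Ag → Bool
  | neg φ => ! evalProp v φ
  | and φ ψ => evalProp v φ && evalProp v ψ
  | φ => v φ

/-- φ is a propositional tautology. -/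
def Tautology (φ : Formula Ag) : Prop := ∀ v : Formula Ag → Bool, evalProp v φ = true

/-- Finite conjunction. -/
def bigAnd (l : List (Formula Ag)) : Formula Ag := l.foldr and verum

end Formula

/-- A fixed enumeration of the (finitely many) agents. -/
noncomputable def agList (Ag : Type) [Fintype Ag] : List Ag := Finset.univ.toList

open Formula in
/-- The Hilbert system TDS. -/
inductive Prv {Ag : Type} [Fintype Ag] : Formula Ag → Prop
  | taut {φ : Formula Ag} : Tautology φ → Prv φ
  -- S5 for □
  | kBox (φ ψ : Formula Ag) : Prv (impl (box (impl φ ψ)) (impl (box φ) (box ψ)))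
  | tBox (φ : Formula Ag) : Prv (impl (box φ) φ)
  | fiveBox (φ : Formula Ag) : Prv (impl (diam φ) (box (diam φ)))
  -- S5 for each [i]
  | kAg (i : Ag) (φ ψ : Formula Ag) :
      Prv (impl (agent i (impl φ ψ)) (impl (agent i φ) (agent i ψ)))
  | tAg (i : Ag) (φ : Formula Ag) : Prv (impl (agent i φ) φ)
  | fiveAg (i : Ag) (φ : Formula Ag) : Prv (impl (diamAg i φ) (agent i (diamAg i φ)))
  -- S5 for [Ag]
  | kCoal (φ ψ : Formula Ag) : Prv (impl (coal (impl φ ψ)) (impl (coal φ) (coal ψ)))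
  | tCoal (φ : Formula Ag) : Prv (impl (coal φ) φ)
  | fiveCoal (φ : Formula Ag) : Prv (impl (diamCoal φ) (coal (diamCoal φ)))
  -- A10 independence of agents
  | a10 (φs : Ag → Formula Ag) :
      Prv (impl (bigAnd ((agList Ag).map (fun i => diam (agent i (φs i)))))
                (diam (bigAnd ((agList Ag).map (fun i => agent i (φs i))))))
  -- A11
  | a11 (φs : Ag → Formula Ag) :
      Prv (impl (bigAnd ((agList Ag).map (fun i => agent i (φs i))))
                (coal (bigAnd ((agList Ag).map (fun i => φs i)))))
  -- A12 K for ⊗_i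
  | a12 (i : Ag) (φ ψ : Formula Ag) :
      Prv (impl (obl i (impl φ ψ)) (impl (obl i φ) (obl i ψ)))
  -- A13
  | a13 (i : Ag) (φ : Formula Ag) : Prv (impl (box φ) (and (agent i φ) (obl i φ)))
  -- A14
  | a14 (i : Ag) (φ : Formula Ag) : Prv (impl (obl i φ) (diam (agent i φ)))
  -- A15
  | a15 (i : Ag) (φ : Formula Ag) : Prv (impl (diam (obl i φ)) (box (obl i φ)))
  -- A16
  | a16 (i : Ag) (φ ψ : Formula Ag) :
      Prv (impl (box (impl (agent i φ) (agent i ψ))) (impl (obl i φ) (obl i ψ)))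
  -- KD4 for G
  | kG (φ ψ : Formula Ag) : Prv (impl (G (impl φ ψ)) (impl (G φ) (G ψ)))
  | fourG (φ : Formula Ag) : Prv (impl (G φ) (G (G φ)))
  | dG (φ : Formula Ag) : Prv (impl (G φ) (F φ))
  -- K for H
  | kH (φ ψ : Formula Ag) : Prv (impl (H (impl φ ψ)) (impl (H φ) (H ψ)))
  -- A21 - A25
  | a21 (φ : Formula Ag) : Prv (impl φ (G (P φ)))
  | a22 (φ : Formula Ag) : Prv (impl φ (H (F φ)))
  | a23 (φ : Formula Ag) : Prv (impl (F (P φ)) (orf (P φ) (orf φ (F φ))))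
  | a24 (φ : Formula Ag) : Prv (impl (P (F φ)) (orf (P φ) (orf φ (F φ))))
  | a25 (φ : Formula Ag) : Prv (impl (F (diam φ)) (diamCoal (F φ)))
  -- rules
  | mp {φ ψ : Formula Ag} : Prv (impl φ ψ) → Prv φ → Prv ψ
  | necBox {φ : Formula Ag} : Prv φ → Prv (box φ)
  | necG {φ : Formula Ag} : Prv φ → Prv (G φ)
  | necH {φ : Formula Ag} : Prv φ → Prv (H φ)
  | r2 {φ : Formula Ag} (p : ℕ) : ¬ occurs p φ → Prv (impl (nameF p) φ) → Prv φ

/-- Derivability from a set of premises (Def. 4.4 of Blackburn–de Rijke–Venema). -/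
def SetProv {Ag : Type} [Fintype Ag] (Γ : Set (Formula Ag)) (φ : Formula Ag) : Prop :=
  ∃ l : List (Formula Ag), (∀ ψ ∈ l, ψ ∈ Γ) ∧ Prv (l.foldr Formula.impl φ)

/-- Maximally consistent set. -/
def MCS {Ag : Type} [Fintype Ag] (Γ : Set (Formula Ag)) : Prop :=
  ¬ SetProv Γ Formula.bot ∧ ∀ Γ' : Set (Formula Ag), Γ ⊂ Γ' → SetProv Γ' Formula.bot

/-- The members of `Boxes`. -/
inductive BoxOp (Ag : Type) : Type
  | box : BoxOp Ag
  | coal : BoxOp Ag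
  | G : BoxOp Ag
  | H : BoxOp Ag
  | agent : Ag → BoxOp Ag
  | obl : Ag → BoxOp Ag

/-- Applying a box operator to a formula. -/
def BoxOp.apply {Ag : Type} : BoxOp Ag → Formula Ag → Formula Ag
  | .box, φ => .box φ
  | .coal, φ => .coal φ
  | .G, φ => .G φ
  | .H, φ => .H φ
  | .agent i, φ => .agent i φ
  | .obl i, φ => .obl i φ

/-- The dual diamond ⟨α⟩ of a box operator [α]. -/
def BoxOp.dual {Ag : Type} (α : BoxOp Ag) (φ : Formula Ag) : Formula Ag :=
  .neg (α.apply (.neg φ))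

/-- Canonical relation: R^dt_[α] Γ Δ iff {φ : [α]φ ∈ Γ} ⊆ Δ. -/
def canR {Ag : Type} (α : BoxOp Ag) (Γ Δ : Set (Formula Ag)) : Prop :=
  ∀ φ : Formula Ag, α.apply φ ∈ Γ → φ ∈ Δ

/-- Zig-zagging formula ⟨α₁⟩(φ₁ ∧ ⟨α₂⟩(φ₂ ∧ … ∧ ⟨αₙ⟩φₙ)…), where `l` lists the
outer pairs (αₖ, φₖ) for k < n and `(α, φ)` is the innermost pair (αₙ, φₙ). -/
def zigzag {Ag : Type} (l : List (BoxOp Ag × Formula Ag)) (α : BoxOp Ag)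
    (φ : Formula Ag) : Formula Ag :=
  l.foldr (fun p acc => p.1.dual (Formula.and p.2 acc)) (α.dual φ)

/-- IRR-theories. -/
def IRRTheory {Ag : Type} [Fintype Ag] (Γ : Set (Formula Ag)) : Prop :=
  MCS Γ ∧ (∃ p : ℕ, Formula.nameF p ∈ Γ) ∧
    ∀ (l : List (BoxOp Ag × Formula Ag)) (α : BoxOp Ag) (φ : Formula Ag),
      zigzag l α φ ∈ Γ → ∃ q : ℕ, zigzag l α (Formula.and φ (Formula.nameF q)) ∈ Γ

/-- Diamond saturated set of MCSs. -/
def DiamondSaturated {Ag : Type} (X : Set (Set (Formula Ag))) : Prop :=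
  ∀ Γ ∈ X, ∀ (α : BoxOp Ag) (φ : Formula Ag), α.dual φ ∈ Γ →
    ∃ Δ ∈ X, canR α Γ Δ ∧ φ ∈ Δ

/-- The relational frame conditions of a TDS-frame. -/
structure IsTDSFrame (Ag W : Type) (Rbox : W → W → Prop) (Rag : Ag → W → W → Prop)
    (Rcoal : W → W → Prop) (RG : W → W → Prop) (RH : W → W → Prop)
    (Robl : Ag → W → W → Prop) : Prop where
  nonempty : Nonempty W
  box_equiv : Equivalence Rbox
  ag_equiv : ∀ i : Ag, Equivalence (Rag i)
  coal_equiv : Equivalence Rcoal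
  c1 : ∀ (i : Ag) (w v : W), Rag i w v → Rbox w v
  c2 : ∀ u : Ag → W, (∀ i j : Ag, Rbox (u i) (u j)) → ∃ v : W, ∀ i : Ag, Rag i (u i) v
  c3 : ∀ w v : W, Rcoal w v → ∀ i : Ag, Rag i w v
  g_trans : ∀ w u v : W, RG w u → RG u v → RG w v
  g_serial : ∀ w : W, ∃ v : W, RG w v
  h_conv : ∀ w v : W, RH w v ↔ RG v w
  t4 : ∀ w u v : W, RG w u → RG w v → RG u v ∨ u = v ∨ RG v u
  t5 : ∀ w u v : W, RH w u → RH w v → RH u v ∨ u = v ∨ RH v u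
  t6 : ∀ w u v : W, RG w u → Rbox u v → ∃ z : W, Rcoal w z ∧ RG z v
  t7 : ∀ w u : W, Rbox w u → ¬ RG w u
  d8 : ∀ (i : Ag) (w v : W), Robl i w v → Rbox w v
  d9 : ∀ (i : Ag) (w : W), ∃ v : W, Rbox w v ∧ ∀ u : W, Rag i v u → Robl i w u
  d10 : ∀ (i : Ag) (w v u z : W), Rbox w v → Rbox w u → Robl i u z → Robl i v z
  d11 : ∀ (i : Ag) (w v : W), Robl i w v →
      ∃ u : W, Rbox w u ∧ Rag i u v ∧ ∀ z : W, Rag i u z → Robl i w z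

/-- The relational frame conditions of a TUS-frame (the non-deontic part of a
TDS-frame). -/
structure IsTUSFrame (Ag W : Type) (Rbox : W → W → Prop) (Rag : Ag → W → W → Prop)
    (Rcoal : W → W → Prop) (RG : W → W → Prop) (RH : W → W → Prop) : Prop where
  nonempty : Nonempty W
  box_equiv : Equivalence Rbox
  ag_equiv : ∀ i : Ag, Equivalence (Rag i)
  coal_equiv : Equivalence Rcoal
  c1 : ∀ (i : Ag) (w v : W), Rag i w v → Rbox w v
  c2 : ∀ u : Ag → W, (∀ i j : Ag, Rbox (u i) (u j)) → ∃ v : W, ∀ i : Ag, Rag i (u i) v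
  c3 : ∀ w v : W, Rcoal w v → ∀ i : Ag, Rag i w v
  g_trans : ∀ w u v : W, RG w u → RG u v → RG w v
  g_serial : ∀ w : W, ∃ v : W, RG w v
  h_conv : ∀ w v : W, RH w v ↔ RG v w
  t4 : ∀ w u v : W, RG w u → RG w v → RG u v ∨ u = v ∨ RG v u
  t5 : ∀ w u v : W, RH w u → RH w v → RH u v ∨ u = v ∨ RH v u
  t6 : ∀ w u v : W, RG w u → Rbox u v → ∃ z : W, Rcoal w z ∧ RG z v
  t7 : ∀ w u : W, Rbox w u → ¬ RG w u

/-- A (bare) relational Kripke model for the language L_TDS. -/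
structure KModel (Ag : Type) where
  W : Type
  Rbox : W → W → Prop
  Rag : Ag → W → W → Prop
  Rcoal : W → W → Prop
  RG : W → W → Prop
  RH : W → W → Prop
  Robl : Ag → W → W → Prop
  val : ℕ → W → Prop

/-- Standard Kripke satisfaction. -/
def KModel.sat {Ag : Type} (M : KModel Ag) : Formula Ag → M.W → Prop
  | .var p, w => M.val p w
  | .neg φ, w => ¬ M.sat φ w
  | .and φ ψ, w => M.sat φ w ∧ M.sat ψ w
  | .box φ, w => ∀ u : M.W, M.Rbox w u → M.sat φ u
  | .agent i φ, w => ∀ u : M.W, M.Rag i w u → M.sat φ u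
  | .coal φ, w => ∀ u : M.W, M.Rcoal w u → M.sat φ u
  | .G φ, w => ∀ u : M.W, M.RG w u → M.sat φ u
  | .H φ, w => ∀ u : M.W, M.RH w u → M.sat φ u
  | .obl i φ, w => ∀ u : M.W, M.Robl i w u → M.sat φ u

/-- A TDS-model: a Kripke model whose frame is a TDS-frame. -/
structure TDSModel (Ag : Type) extends KModel Ag where
  frame : IsTDSFrame Ag W Rbox Rag Rcoal RG RH Robl

/-- Satisfaction on TDS-models. -/
abbrev TDSModel.sat {Ag : Type} (M : TDSModel Ag) : Formula Ag → M.W → Prop :=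
  M.toKModel.sat

/-- The canonical model with domain restricted to a set `X` of theories. -/
def canonicalModel (Ag : Type) (X : Set (Set (Formula Ag))) : KModel Ag where
  W := X
  Rbox Γ Δ := canR BoxOp.box Γ.1 Δ.1
  Rag i Γ Δ := canR (BoxOp.agent i) Γ.1 Δ.1
  Rcoal Γ Δ := canR BoxOp.coal Γ.1 Δ.1
  RG Γ Δ := canR BoxOp.G Γ.1 Δ.1
  RH Γ Δ := canR BoxOp.H Γ.1 Δ.1
  Robl i Γ Δ := canR (BoxOp.obl i) Γ.1 Δ.1
  val p Γ := Formula.var p ∈ Γ.1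

/-- A temporal utilitarian STIT model (TUS-model). -/
structure TUSModel (Ag : Type) where
  W : Type
  Rbox : W → W → Prop
  Rag : Ag → W → W → Prop
  Rcoal : W → W → Prop
  RG : W → W → Prop
  RH : W → W → Prop
  util : W → ℕ
  val : ℕ → W → Prop
  frame : IsTUSFrame Ag W Rbox Rag Rcoal RG RH

namespace TUSModel

variable {Ag : Type}

/-- The moment R_□(w). -/
def mom (M : TUSModel Ag) (w : M.W) : Set M.W := {u | M.Rbox w u}

/-- The choice cell R_[i](v). -/
def cell (M : TUSModel Ag) (i : Ag) (v : M.W) : Set M.W := {u | M.Rag i v u}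

/-- The state R^s_[i](v) := ⋂_{k ≠ i} R_[k](v). -/
def state (M : TUSModel Ag) (i : Ag) (v : M.W) : Set M.W :=
  {u | ∀ k : Ag, k ≠ i → M.Rag k v u}

/-- Weak preference ≤ between sets of worlds. -/
def pref (M : TUSModel Ag) (A B : Set M.W) : Prop :=
  ∀ a ∈ A, ∀ b ∈ B, M.util a ≤ M.util b

/-- Weak dominance ⪯ between sets of worlds, relative to the moment of `w`:
for every state included in the moment R_□(w), the restriction of `A` is weakly
preferred to the restriction of `B`. -/
def dom (M : TUSModel Ag) (i : Ag) (w : M.W) (A B : Set M.W) : Prop :=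
  ∀ x : M.W, M.state i x ⊆ M.mom w → M.pref (A ∩ M.state i x) (B ∩ M.state i x)

/-- Strict dominance ≺. -/
def sdom (M : TUSModel Ag) (i : Ag) (w : M.W) (A B : Set M.W) : Prop :=
  M.dom i w A B ∧ ¬ M.dom i w B A

/-- Satisfaction on TUS-models, with the dominance-based clause for ⊗_i. -/
def sat (M : TUSModel Ag) : Formula Ag → M.W → Prop
  | .var p, w => M.val p w
  | .neg φ, w => ¬ M.sat φ w
  | .and φ ψ, w => M.sat φ w ∧ M.sat ψ w
  | .box φ, w => ∀ u : M.W, M.Rbox w u → M.sat φ u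
  | .agent i φ, w => ∀ u : M.W, M.Rag i w u → M.sat φ u
  | .coal φ, w => ∀ u : M.W, M.Rcoal w u → M.sat φ u
  | .G φ, w => ∀ u : M.W, M.RG w u → M.sat φ u
  | .H φ, w => ∀ u : M.W, M.RH w u → M.sat φ u
  | .obl i φ, w =>
      ∀ v : M.W, M.cell i v ⊆ M.mom w → ¬ (M.cell i v ⊆ {u : M.W | M.sat φ u}) →
        ∃ z : M.W, M.cell i z ⊆ M.mom w ∧
          M.sdom i w (M.cell i v) (M.cell i z) ∧
          M.cell i z ⊆ {u : M.W | M.sat φ u} ∧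
          ∀ x : M.W, M.cell i x ⊆ M.mom w →
            M.dom i w (M.cell i z) (M.cell i x) → M.cell i x ⊆ {u : M.W | M.sat φ u}

end TUSModel

/-- Replacing the deontic relations of a TDS-model by a utility function yields
a TUS-model over the same worlds, relations and valuation. -/
def TDSModel.toTUS {Ag : Type} (M : TDSModel Ag) (util : M.W → ℕ) : TUSModel Ag where
  W := M.W
  Rbox := M.Rbox
  Rag := M.Rag
  Rcoal := M.Rcoal
  RG := M.RG
  RH := M.RH
  util := util
  val := M.val
  frame :=
    { nonempty := M.frame.nonempty
      box_equiv := M.frame.box_equiv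
      ag_equiv := M.frame.ag_equiv
      coal_equiv := M.frame.coal_equiv
      c1 := M.frame.c1
      c2 := M.frame.c2
      c3 := M.frame.c3
      g_trans := M.frame.g_trans
      g_serial := M.frame.g_serial
      h_conv := M.frame.h_conv
      t4 := M.frame.t4
      t5 := M.frame.t5
      t6 := M.frame.t6
      t7 := M.frame.t7 }

/-!
Each axiom of TDS is valid because it is the modal counterpart of a frame condition: S5, K, D and 4
of the properties of the relations, (A10)–(A16) of (C1)–(C3) and (D8)–(D11), (A21)–(A24) of `R_H`
being the converse of the connected relation `R_G`, and (A25) of (T6). For the irreflexivity rule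
(R2), reinterpret the fresh variable `p` as the set of worlds strictly before or after some world
of the moment of `w`: by (T7) this makes `□¬p ∧ □(Gp ∧ Hp)` true at `w`, while the truth value of
the `p`-free conclusion does not change.
-/

open Formula

namespace KModel

variable {Ag : Type} (M : KModel Ag)

def rel : BoxOp Ag → M.W → M.W → Prop
  | .box => M.Rbox
  | .coal => M.Rcoal
  | .G => M.RG
  | .H => M.RH
  | .agent i => M.Rag i
  | .obl i => M.Robl i

def updateVal (p : ℕ) (V : M.W → Prop) : KModel Ag :=
  { M with val := Function.update M.val p V }

lemma sat_neg (φ : Formula Ag) (w : M.W) : M.sat (.neg φ) w ↔ ¬ M.sat φ w := Iff.rfl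

lemma sat_and (φ ψ : Formula Ag) (w : M.W) :
    M.sat (.and φ ψ) w ↔ M.sat φ w ∧ M.sat ψ w := Iff.rfl

lemma sat_impl (φ ψ : Formula Ag) (w : M.W) :
    M.sat (φ.impl ψ) w ↔ (M.sat φ w → M.sat ψ w) := by
  simp only [impl, sat_neg, sat_and, not_and, not_not]

lemma sat_orf (φ ψ : Formula Ag) (w : M.W) :
    M.sat (φ.orf ψ) w ↔ M.sat φ w ∨ M.sat ψ w := by
  simp only [orf, sat_neg, sat_and]
  tauto

lemma sat_verum (w : M.W) : M.sat verum w := by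
  simp only [verum, bot, sat_neg, sat_and]
  tauto

lemma sat_apply (α : BoxOp Ag) (φ : Formula Ag) (w : M.W) :
    M.sat (α.apply φ) w ↔ ∀ u, M.rel α w u → M.sat φ u := by
  cases α <;> rfl

lemma sat_dual (α : BoxOp Ag) (φ : Formula Ag) (w : M.W) :
    M.sat (α.dual φ) w ↔ ∃ u, M.rel α w u ∧ M.sat φ u := by
  simp only [BoxOp.dual, sat_neg, sat_apply, not_forall, not_not, exists_prop]

lemma sat_diam (φ : Formula Ag) (w : M.W) : M.sat φ.diam w ↔ ∃ u, M.Rbox w u ∧ M.sat φ u :=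
  M.sat_dual .box φ w

lemma sat_diamCoal (φ : Formula Ag) (w : M.W) :
    M.sat φ.diamCoal w ↔ ∃ u, M.Rcoal w u ∧ M.sat φ u :=
  M.sat_dual .coal φ w

lemma sat_F (φ : Formula Ag) (w : M.W) : M.sat φ.F w ↔ ∃ u, M.RG w u ∧ M.sat φ u :=
  M.sat_dual .G φ w

lemma sat_bigAnd (l : List (Formula Ag)) (w : M.W) :
    M.sat (bigAnd l) w ↔ ∀ ψ ∈ l, M.sat ψ w := by
  induction l with
  | nil => simp [bigAnd, sat_verum]
  | cons ψ l ih => simp only [bigAnd] at ih; simp [bigAnd, sat_and, ih]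

lemma sat_bigAnd_agList [Fintype Ag] (f : Ag → Formula Ag) (w : M.W) :
    M.sat (bigAnd ((agList Ag).map f)) w ↔ ∀ i, M.sat (f i) w := by
  simp [sat_bigAnd, agList]

open Classical in
lemma evalProp_sat (φ : Formula Ag) (w : M.W) :
    evalProp (fun ψ => decide (M.sat ψ w)) φ = true ↔ M.sat φ w := by
  induction φ with
  | neg φ ih => simp only [evalProp, Bool.not_eq_true', ← Bool.not_eq_true, ih, sat_neg]
  | and φ ψ ih₁ ih₂ => simp only [evalProp, Bool.and_eq_true, ih₁, ih₂, sat_and]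
  | _ => simp only [evalProp, decide_eq_true_iff]

lemma sat_of_tautology {φ : Formula Ag} (h : Tautology φ) (w : M.W) : M.sat φ w :=
  (M.evalProp_sat φ w).mp (h _)

lemma sat_updateVal {p : ℕ} (V : M.W → Prop) {φ : Formula Ag} (hp : ¬ φ.occurs p) (w : M.W) :
    (M.updateVal p V).sat φ w ↔ M.sat φ w := by
  induction φ generalizing w with
  | var q =>
    simp only [occurs] at hp
    simp only [sat, updateVal, Function.update_of_ne (Ne.symm hp)]
  | neg φ ih => exact not_congr (ih hp w)
  | and φ ψ ih₁ ih₂ =>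
    simp only [occurs, not_or] at hp
    exact and_congr (ih₁ hp.1 w) (ih₂ hp.2 w)
  | box φ ih | agent _ φ ih | coal φ ih | G φ ih | H φ ih | obl _ φ ih =>
    exact forall_congr' fun u => imp_congr Iff.rfl (ih hp u)

lemma sat_updateVal_var (p : ℕ) (V : M.W → Prop) (w : M.W) :
    (M.updateVal p V).sat (var p) w ↔ V w := by
  simp only [updateVal, sat, Function.update_self]

lemma sat_apply_of_forall (α : BoxOp Ag) {φ : Formula Ag} (h : ∀ u, M.sat φ u) (w : M.W) :
    M.sat (α.apply φ) w :=
  (M.sat_apply α φ w).mpr fun u _ => h u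

variable (α β : BoxOp Ag) (φ ψ : Formula Ag) {w : M.W}

lemma sat_K : M.sat (impl (α.apply (impl φ ψ)) (impl (α.apply φ) (α.apply ψ))) w := by
  simp only [sat_impl, sat_apply]
  exact fun himp hφ u hu => himp u hu (hφ u hu)

lemma sat_T (hα : ∀ w, M.rel α w w) : M.sat (impl (α.apply φ) φ) w :=
  (M.sat_impl _ _ w).mpr fun h => (M.sat_apply α φ w).mp h w (hα w)

lemma sat_five (hα : Equivalence (M.rel α)) :
    M.sat (impl (α.dual φ) (α.apply (α.dual φ))) w := by
  simp only [sat_impl, sat_apply, sat_dual]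
  rintro ⟨u, hwu, hu⟩ v hwv
  exact ⟨u, hα.trans (hα.symm hwv) hwu, hu⟩

lemma sat_D (hα : ∀ w, ∃ u, M.rel α w u) : M.sat (impl (α.apply φ) (α.dual φ)) w := by
  simp only [sat_impl, sat_apply, sat_dual]
  obtain ⟨u, hu⟩ := hα w
  exact fun h => ⟨u, hu, h u hu⟩

lemma sat_four (hα : ∀ w u v, M.rel α w u → M.rel α u v → M.rel α w v) :
    M.sat (impl (α.apply φ) (α.apply (α.apply φ))) w := by
  simp only [sat_impl, sat_apply]
  exact fun h u hwu v huv => h v (hα w u v hwu huv)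

lemma sat_imp_apply_dual (hαβ : ∀ w u, M.rel α w u → M.rel β u w) :
    M.sat (impl φ (α.apply (β.dual φ))) w := by
  simp only [sat_impl, sat_apply, sat_dual]
  exact fun h u hwu => ⟨w, hαβ w u hwu, h⟩

lemma sat_or_of_sat_dual_dual (hαβ : ∀ w u, M.rel α w u ↔ M.rel β u w)
    (hβ : ∀ w u v, M.rel β w u → M.rel β w v → M.rel β u v ∨ u = v ∨ M.rel β v u)
    (h : M.sat (α.dual (β.dual φ)) w) :
    M.sat (β.dual φ) w ∨ M.sat φ w ∨ M.sat (α.dual φ) w := by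
  simp only [sat_dual] at h ⊢
  obtain ⟨u, hwu, v, huv, hv⟩ := h
  rcases hβ u w v ((hαβ w u).mp hwu) huv with hwv | rfl | hvw
  · exact .inl ⟨v, hwv, hv⟩
  · exact .inr (.inl hv)
  · exact .inr (.inr ⟨v, (hαβ w v).mpr hvw, hv⟩)

end KModel

namespace TDSModel

variable {Ag : Type} (M : TDSModel Ag)

open KModel (sat_impl sat_orf sat_diam sat_diamCoal sat_F sat_bigAnd_agList)

def updateVal (p : ℕ) (V : M.W → Prop) : TDSModel Ag :=
  { M.toKModel.updateVal p V with frame := M.frame }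

lemma exists_box_forall_agent {w : M.W} {u : Ag → M.W} (hu : ∀ i, M.Rbox w (u i)) :
    ∃ v, M.Rbox w v ∧ ∀ i, M.Rag i (u i) v := by
  have hbox := M.frame.box_equiv
  rcases isEmpty_or_nonempty Ag with hAg | ⟨⟨i⟩⟩
  -- with no agents, (C2) does not place its witness in the moment of `w`
  · exact ⟨w, hbox.refl w, isEmptyElim⟩
  · obtain ⟨v, hv⟩ := M.frame.c2 u fun i j => hbox.trans (hbox.symm (hu i)) (hu j)
    exact ⟨v, hbox.trans (hu i) (M.frame.c1 i _ _ (hv i)), hv⟩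

variable (i : Ag) (φ ψ : Formula Ag) {w : M.W}

lemma sat_independence [Fintype Ag] (φs : Ag → Formula Ag) :
    M.sat (impl (bigAnd ((agList Ag).map fun i => diam (agent i (φs i))))
      (diam (bigAnd ((agList Ag).map fun i => agent i (φs i))))) w := by
  simp only [sat_impl, sat_bigAnd_agList, sat_diam]
  intro h
  choose u hwu hu using h
  obtain ⟨v, hwv, hv⟩ := M.exists_box_forall_agent hwu
  exact ⟨v, hwv, fun i z hvz => hu i z ((M.frame.ag_equiv i).trans (hv i) hvz)⟩

lemma sat_coalition [Fintype Ag] (φs : Ag → Formula Ag) :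
    M.sat (impl (bigAnd ((agList Ag).map fun i => agent i (φs i)))
      (coal (bigAnd ((agList Ag).map φs)))) w := by
  simp only [sat_impl, sat_bigAnd_agList]
  exact fun h v hwv => (M.sat_bigAnd_agList φs v).mpr fun i => h i v (M.frame.c3 w v hwv i)

lemma sat_box_imp_agent_and_obl : M.sat (impl (box φ) (and (agent i φ) (obl i φ))) w :=
  (M.sat_impl _ _ w).mpr fun h =>
    ⟨fun u hu => h u (M.frame.c1 i w u hu), fun u hu => h u (M.frame.d8 i w u hu)⟩

lemma sat_obl_imp_diam_agent : M.sat (impl (obl i φ) (diam (agent i φ))) w := by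
  simp only [sat_impl, sat_diam]
  obtain ⟨v, hwv, hv⟩ := M.frame.d9 i w
  exact fun h => ⟨v, hwv, fun u hvu => h u (hv u hvu)⟩

lemma sat_diam_obl_imp_box_obl : M.sat (impl (diam (obl i φ)) (box (obl i φ))) w := by
  simp only [sat_impl, sat_diam]
  rintro ⟨u, hwu, hu⟩ v hwv z hvz
  exact hu z (M.frame.d10 i w u v z hwu hwv hvz)

lemma sat_obl_mono :
    M.sat (impl (box (impl (agent i φ) (agent i ψ))) (impl (obl i φ) (obl i ψ))) w := by
  simp only [sat_impl]
  intro h hφ v hwv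
  obtain ⟨u, hwu, huv, hu⟩ := M.frame.d11 i w v hwv
  exact (M.sat_impl _ _ u).mp (h u hwu) (fun z huz => hφ z (hu z huz)) v huv

lemma sat_F_diam_imp_diamCoal_F : M.sat (impl (F (diam φ)) (diamCoal (F φ))) w := by
  simp only [sat_impl, sat_F, sat_diam, sat_diamCoal]
  rintro ⟨u, hwu, v, huv, hv⟩
  obtain ⟨z, hwz, hzv⟩ := M.frame.t6 w u v hwu huv
  exact ⟨z, hwz, v, hzv, hv⟩

lemma sat_FP_imp_P_or_F : M.sat (impl (F (P φ)) (orf (P φ) (orf φ (F φ)))) w := by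
  simp only [sat_impl, sat_orf]
  exact M.sat_or_of_sat_dual_dual .G .H φ (fun w u => (M.frame.h_conv u w).symm) M.frame.t5

lemma sat_PF_imp_P_or_F : M.sat (impl (P (F φ)) (orf (P φ) (orf φ (F φ)))) w := by
  simp only [sat_impl, sat_orf]
  intro h
  have := M.sat_or_of_sat_dual_dual .H .G φ M.frame.h_conv M.frame.t4 h
  tauto

def offMoment (w x : M.W) : Prop := ∃ u, M.Rbox w u ∧ (M.RG u x ∨ M.RG x u)

lemma sat_nameF_offMoment (w : M.W) (p : ℕ) : (M.updateVal p (M.offMoment w)).sat (nameF p) w := by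
  have hbox := M.frame.box_equiv
  have hvar := M.toKModel.sat_updateVal_var p (M.offMoment w)
  refine ⟨fun u hwu hu => ?_, fun u hwu => ⟨fun z huz => ?_, fun z huz => ?_⟩⟩
  · obtain ⟨u', hwu', hu'u | huu'⟩ := (hvar u).mp hu
    · exact M.frame.t7 u' u (hbox.trans (hbox.symm hwu') hwu) hu'u
    · exact M.frame.t7 u u' (hbox.trans (hbox.symm hwu) hwu') huu'
  · exact (hvar z).mpr ⟨u, hwu, .inl huz⟩
  · exact (hvar z).mpr ⟨u, hwu, .inr ((M.frame.h_conv u z).mp huz)⟩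

lemma sat_of_valid_nameF_imp {p : ℕ} (hp : ¬ φ.occurs p)
    (h : ∀ (M : TDSModel Ag) (w : M.W), M.sat (impl (nameF p) φ) w) : M.sat φ w := by
  let M' := M.updateVal p (M.offMoment w)
  have hφ : M'.sat φ w := (sat_impl M'.toKModel _ _ w).mp (h M' w) (M.sat_nameF_offMoment w p)
  exact (M.toKModel.sat_updateVal _ hp w).mp hφ

end TDSModel

theorem tds_soundness_general {Ag : Type} [Fintype Ag]
    (φ : Formula Ag) (h : Prv φ) :
    ∀ (M : TDSModel Ag) (w : M.W), M.sat φ w := by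
  intro M w
  induction h generalizing M w with
  | taut h => exact M.sat_of_tautology h w
  | kBox φ ψ => exact M.sat_K .box φ ψ
  | tBox φ => exact M.sat_T .box φ M.frame.box_equiv.refl
  | fiveBox φ => exact M.sat_five .box φ M.frame.box_equiv
  | kAg i φ ψ => exact M.sat_K (.agent i) φ ψ
  | tAg i φ => exact M.sat_T (.agent i) φ (M.frame.ag_equiv i).refl
  | fiveAg i φ => exact M.sat_five (.agent i) φ (M.frame.ag_equiv i)
  | kCoal φ ψ => exact M.sat_K .coal φ ψ
  | tCoal φ => exact M.sat_T .coal φ M.frame.coal_equiv.refl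
  | fiveCoal φ => exact M.sat_five .coal φ M.frame.coal_equiv
  | a10 φs => exact M.sat_independence φs
  | a11 φs => exact M.sat_coalition φs
  | a12 i φ ψ => exact M.sat_K (.obl i) φ ψ
  | a13 i φ => exact M.sat_box_imp_agent_and_obl i φ
  | a14 i φ => exact M.sat_obl_imp_diam_agent i φ
  | a15 i φ => exact M.sat_diam_obl_imp_box_obl i φ
  | a16 i φ ψ => exact M.sat_obl_mono i φ ψ
  | kG φ ψ => exact M.sat_K .G φ ψ
  | fourG φ => exact M.sat_four .G φ M.frame.g_trans
  | dG φ => exact M.sat_D .G φ M.frame.g_serial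
  | kH φ ψ => exact M.sat_K .H φ ψ
  | a21 φ => exact M.sat_imp_apply_dual .G .H φ fun w u => (M.frame.h_conv u w).mpr
  | a22 φ => exact M.sat_imp_apply_dual .H .G φ fun w u => (M.frame.h_conv w u).mp
  | a23 φ => exact M.sat_FP_imp_P_or_F φ
  | a24 φ => exact M.sat_PF_imp_P_or_F φ
  | a25 φ => exact M.sat_F_diam_imp_diamCoal_F φ
  | mp _ _ ihImp ih => exact (M.sat_impl _ _ w).mp (ihImp M w) (ih M w)
  | necBox _ ih => exact M.sat_apply_of_forall .box (ih M) w
  | necG _ ih => exact M.sat_apply_of_forall .G (ih M) w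
  | necH _ ih => exact M.sat_apply_of_forall .H (ih M) w
  | r2 p hp _ ih => exact M.sat_of_valid_nameF_imp _ hp ih

/-- **Soundness of TDS**: every theorem of the Hilbert system TDS is valid on
every TDS-model. -/
theorem tds_soundness {Ag : Type} [Fintype Ag] [Nonempty Ag]
    (φ : Formula Ag) (h : Prv φ) :
    ∀ (M : TDSModel Ag) (w : M.W), M.sat φ w :=
  tds_soundness_general φ h
end

section
/- Semantic soundness of the irreflexivity rule R2: if p is a propositional variable that does not occur in the formula φ, and the formula (□¬p ∧ □(Gp ∧ Hp)) → φ is valid on every TDS-model, then φ is valid on every TDS-model. -/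
private lemma sat_val_congr {Ag : Type} (M : KModel Ag) (p : ℕ) (val' : ℕ → M.W → Prop)
    (hag : ∀ q, q ≠ p → val' q = M.val q) :
    ∀ (ψ : Formula Ag), ¬ Formula.occurs p ψ → ∀ w : M.W,
      KModel.sat { M with val := val' } ψ w ↔ M.sat ψ w := by
  intro ψ
  induction ψ with
  | var q =>
    intro h w
    simp only [KModel.sat]
    rw [hag q (fun e => h (e ▸ rfl))]
  | neg ψ ih =>
    intro h w; simp only [KModel.sat]; rw [ih h w]
  | and ψ χ ih1 ih2 =>
    intro h w
    simp only [KModel.sat]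
    rw [ih1 (fun hc => h (Or.inl hc)) w, ih2 (fun hc => h (Or.inr hc)) w]
  | box ψ ih =>
    intro h w; simp only [KModel.sat]
    exact forall_congr' fun u => imp_congr Iff.rfl (ih h u)
  | agent i ψ ih =>
    intro h w; simp only [KModel.sat]
    exact forall_congr' fun u => imp_congr Iff.rfl (ih h u)
  | coal ψ ih =>
    intro h w; simp only [KModel.sat]
    exact forall_congr' fun u => imp_congr Iff.rfl (ih h u)
  | G ψ ih =>
    intro h w; simp only [KModel.sat]
    exact forall_congr' fun u => imp_congr Iff.rfl (ih h u)
  | H ψ ih =>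
    intro h w; simp only [KModel.sat]
    exact forall_congr' fun u => imp_congr Iff.rfl (ih h u)
  | obl i ψ ih =>
    intro h w; simp only [KModel.sat]
    exact forall_congr' fun u => imp_congr Iff.rfl (ih h u)

/-- **Semantic soundness of the irreflexivity rule R2**: if `p` does not occur in
`φ` and `(□¬p ∧ □(Gp ∧ Hp)) → φ` is valid on every TDS-model, then `φ` is valid
on every TDS-model. -/
theorem r2_semantically_sound {Ag : Type} [Fintype Ag] [Nonempty Ag]
    (p : ℕ) (φ : Formula Ag) (hocc : ¬ Formula.occurs p φ)
    (hval : ∀ (M : TDSModel Ag) (w : M.W), M.sat (Formula.impl (Formula.nameF p) φ) w) :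
    ∀ (M : TDSModel Ag) (w : M.W), M.sat φ w := by
  intro M w
  -- new valuation for p
  set val' : ℕ → M.W → Prop := fun q u =>
    if q = p then (∃ x : M.W, M.Rbox w x ∧ (M.RG x u ∨ M.RH x u)) else M.val q u with hval'
  have hag : ∀ q, q ≠ p → val' q = M.val q := by
    intro q hq; funext u; simp [hval', hq]
  let M' : TDSModel Ag := { toKModel := { M.toKModel with val := val' }, frame := M.frame }
  have key := hval M' w
  simp only [Formula.impl, Formula.nameF, TDSModel.sat, KModel.sat, not_and, not_not] at key
  have hname : (∀ u : M.W, M.Rbox w u → ¬ val' p u) ∧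
      (∀ u : M.W, M.Rbox w u →
        (∀ v : M.W, M.RG u v → val' p v) ∧ (∀ v : M.W, M.RH u v → val' p v)) := by
    constructor
    · intro u hu hpu
      simp only [hval', if_pos rfl] at hpu
      obtain ⟨x, hx, hgu⟩ := hpu
      have hxu : M.Rbox x u := M.frame.box_equiv.trans (M.frame.box_equiv.symm hx) hu
      rcases hgu with hg | hh
      · exact M.frame.t7 x u hxu hg
      · exact M.frame.t7 u x (M.frame.box_equiv.symm hxu) ((M.frame.h_conv x u).mp hh)
    · intro u hu
      constructor
      · intro v hv; simp only [hval', if_pos rfl]; exact ⟨u, hu, Or.inl hv⟩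
      · intro v hv; simp only [hval', if_pos rfl]; exact ⟨u, hu, Or.inr hv⟩
  have hφ' : M'.sat φ w := by
    have := key ⟨fun u hu hpu => hname.1 u hu hpu,
      fun u hu => ⟨(hname.2 u hu).1, (hname.2 u hu).2⟩⟩
    exact this
  exact (sat_val_congr M.toKModel p val' hag φ hocc w).mp hφ'
end

section
/- Truth lemma: let X be a diamond saturated set of maximally consistent sets, let Γ ∈ X, and let M^dt|_X be the canonical model restricted to X. Then for every formula φ ∈ L_TDS: M^dt|_X, Γ ⊨ φ if and only if φ ∈ Γ. -/
/-! ## Auxiliary lemmas for the truth lemma -/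

section TruthAux

open Formula

variable {Ag : Type}

lemma evalProp_neg' (v : Formula Ag → Bool) (φ : Formula Ag) :
    evalProp v (neg φ) = !evalProp v φ := rfl

lemma evalProp_and' (v : Formula Ag → Bool) (φ ψ : Formula Ag) :
    evalProp v (and φ ψ) = (evalProp v φ && evalProp v ψ) := rfl

lemma evalProp_impl' (v : Formula Ag → Bool) (φ ψ : Formula Ag) :
    evalProp v (impl φ ψ) = !(evalProp v φ && !evalProp v ψ) := rfl

lemma evalProp_bot' (v : Formula Ag → Bool) :
    evalProp v (bot : Formula Ag) = false := by
  show (evalProp v (var 0) && !evalProp v (var 0)) = false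
  cases evalProp v (var 0 : Formula Ag) <;> rfl

lemma eval_foldr (v : Formula Ag → Bool) :
    ∀ (l : List (Formula Ag)) (χ : Formula Ag),
      evalProp v (l.foldr impl χ) = (!l.all (evalProp v) || evalProp v χ)
  | [], χ => by simp
  | a :: l, χ => by
    show evalProp v (impl a (l.foldr impl χ)) = _
    rw [evalProp_impl', eval_foldr v l χ, List.all_cons]
    cases evalProp v a <;> cases l.all (evalProp v) <;> cases evalProp v χ <;> rfl

/-! ### Propositional tautologies -/

lemma taut_self (φ : Formula Ag) : Tautology (impl φ φ) := by
  intro v; rw [evalProp_impl']; cases evalProp v φ <;> rfl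

lemma taut_k (φ ψ : Formula Ag) : Tautology (impl φ (impl ψ φ)) := by
  intro v; rw [evalProp_impl', evalProp_impl']
  cases evalProp v φ <;> cases evalProp v ψ <;> rfl

lemma taut_pair (ψ : Formula Ag) : Tautology (impl ψ (impl (neg ψ) bot)) := by
  intro v; rw [evalProp_impl', evalProp_impl', evalProp_neg', evalProp_bot']
  cases evalProp v ψ <;> rfl

lemma taut_em (ψ : Formula Ag) :
    Tautology (impl (impl ψ bot) (impl (impl (neg ψ) bot) bot)) := by
  intro v
  rw [evalProp_impl', evalProp_impl', evalProp_impl', evalProp_impl',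
    evalProp_neg', evalProp_bot']
  cases evalProp v ψ <;> rfl

lemma taut_dneg (ψ : Formula Ag) : Tautology (impl (neg (neg ψ)) ψ) := by
  intro v; rw [evalProp_impl', evalProp_neg', evalProp_neg']
  cases evalProp v ψ <;> rfl

lemma taut_and_left (φ ψ : Formula Ag) : Tautology (impl (and φ ψ) φ) := by
  intro v; rw [evalProp_impl', evalProp_and']
  cases evalProp v φ <;> cases evalProp v ψ <;> rfl

lemma taut_and_right (φ ψ : Formula Ag) : Tautology (impl (and φ ψ) ψ) := by
  intro v; rw [evalProp_impl', evalProp_and']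
  cases evalProp v φ <;> cases evalProp v ψ <;> rfl

lemma taut_and_intro (φ ψ : Formula Ag) :
    Tautology (impl φ (impl ψ (and φ ψ))) := by
  intro v; rw [evalProp_impl', evalProp_impl', evalProp_and']
  cases evalProp v φ <;> cases evalProp v ψ <;> rfl

lemma ded_taut (l l' : List (Formula Ag)) (ψ χ : Formula Ag)
    (h : ∀ a ∈ l, a ∈ l' ∨ a = ψ) :
    Tautology (impl (l.foldr impl χ) (l'.foldr impl (impl ψ χ))) := by
  intro v
  rw [evalProp_impl', eval_foldr, eval_foldr, evalProp_impl']
  by_cases hA' : l'.all (evalProp v) = true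
  · by_cases hψ : evalProp v ψ = true
    · have hA : l.all (evalProp v) = true := by
        rw [List.all_eq_true]
        intro a ha
        rcases h a ha with h' | h'
        · exact List.all_eq_true.mp hA' a h'
        · rw [h']; exact hψ
      rw [hA, hA', hψ]
      cases evalProp v χ <;> rfl
    · rw [hA', Bool.eq_false_iff.mpr hψ]
      cases l.all (evalProp v) <;> cases evalProp v χ <;> rfl
  · rw [Bool.eq_false_iff.mpr hA']
    cases l.all (evalProp v) <;> cases evalProp v χ <;> cases evalProp v ψ <;> rfl

lemma mp_taut (l₁ l₂ : List (Formula Ag)) (ψ χ : Formula Ag) :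
    Tautology (impl (l₁.foldr impl (impl ψ χ))
      (impl (l₂.foldr impl ψ) ((l₁ ++ l₂).foldr impl χ))) := by
  intro v
  rw [evalProp_impl', evalProp_impl', eval_foldr, eval_foldr, eval_foldr,
    evalProp_impl', List.all_append]
  cases l₁.all (evalProp v) <;> cases l₂.all (evalProp v) <;>
    cases evalProp v ψ <;> cases evalProp v χ <;> rfl

/-! ### SetProv and MCS facts -/

variable [Fintype Ag]

lemma sp_of_prv {Γ : Set (Formula Ag)} {χ : Formula Ag} (h : Prv χ) :
    SetProv Γ χ :=
  ⟨[], by simp, h⟩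

lemma sp_mem {Γ : Set (Formula Ag)} {ψ : Formula Ag} (h : ψ ∈ Γ) :
    SetProv Γ ψ :=
  ⟨[ψ], by simpa using h, Prv.taut (taut_self ψ)⟩

lemma sp_mp {Γ : Set (Formula Ag)} {ψ χ : Formula Ag}
    (h1 : SetProv Γ (impl ψ χ)) (h2 : SetProv Γ ψ) : SetProv Γ χ := by
  obtain ⟨l₁, hl₁, hp₁⟩ := h1
  obtain ⟨l₂, hl₂, hp₂⟩ := h2
  refine ⟨l₁ ++ l₂, ?_, ?_⟩
  · intro a ha
    rcases List.mem_append.mp ha with h | h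
    · exact hl₁ a h
    · exact hl₂ a h
  · exact Prv.mp (Prv.mp (Prv.taut (mp_taut l₁ l₂ ψ χ)) hp₁) hp₂

lemma sp_ded {Γ : Set (Formula Ag)} {ψ χ : Formula Ag}
    (h : SetProv (insert ψ Γ) χ) : SetProv Γ (impl ψ χ) := by
  classical
  obtain ⟨l, hl, hp⟩ := h
  refine ⟨l.filter (fun a => a ≠ ψ), ?_, ?_⟩
  · intro a ha
    have h' := List.mem_filter.mp ha
    have hne : a ≠ ψ := by simpa using h'.2
    rcases Set.mem_insert_iff.mp (hl a h'.1) with h'' | h''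
    · exact absurd h'' hne
    · exact h''
  · refine Prv.mp (Prv.taut (ded_taut l _ ψ χ ?_)) hp
    intro a ha
    by_cases hne : a = ψ
    · exact Or.inr hne
    · exact Or.inl (List.mem_filter.mpr ⟨ha, by simpa using hne⟩)

lemma mcs_closed {Γ : Set (Formula Ag)} (h : MCS Γ) {ψ : Formula Ag}
    (hp : SetProv Γ ψ) : ψ ∈ Γ := by
  by_contra hmem
  have hss : Γ ⊂ insert ψ Γ := Set.ssubset_insert hmem
  have hbot := h.2 _ hss
  exact h.1 (sp_mp (sp_ded hbot) hp)

lemma mcs_prv_mem {Γ : Set (Formula Ag)} (h : MCS Γ) {ψ : Formula Ag}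
    (hp : Prv ψ) : ψ ∈ Γ :=
  mcs_closed h (sp_of_prv hp)

lemma mcs_mp {Γ : Set (Formula Ag)} (h : MCS Γ) {ψ χ : Formula Ag}
    (h1 : impl ψ χ ∈ Γ) (h2 : ψ ∈ Γ) : χ ∈ Γ :=
  mcs_closed h (sp_mp (sp_mem h1) (sp_mem h2))

lemma mcs_not_pair {Γ : Set (Formula Ag)} (h : MCS Γ) {ψ : Formula Ag}
    (h1 : ψ ∈ Γ) (h2 : neg ψ ∈ Γ) : False :=
  h.1 (sp_mp (sp_mp (sp_of_prv (Prv.taut (taut_pair ψ))) (sp_mem h1)) (sp_mem h2))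

lemma mcs_neg_of_not {Γ : Set (Formula Ag)} (h : MCS Γ) {ψ : Formula Ag}
    (h1 : ψ ∉ Γ) : neg ψ ∈ Γ := by
  by_contra h2
  have hb1 : SetProv Γ (impl ψ bot) := sp_ded (h.2 _ (Set.ssubset_insert h1))
  have hb2 : SetProv Γ (impl (neg ψ) bot) := sp_ded (h.2 _ (Set.ssubset_insert h2))
  exact h.1 (sp_mp (sp_mp (sp_of_prv (Prv.taut (taut_em ψ))) hb1) hb2)

lemma mcs_dneg {Γ : Set (Formula Ag)} (h : MCS Γ) {ψ : Formula Ag}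
    (h1 : neg (neg ψ) ∈ Γ) : ψ ∈ Γ :=
  mcs_mp h (mcs_prv_mem h (Prv.taut (taut_dneg ψ))) h1

lemma mcs_and_iff {Γ : Set (Formula Ag)} (h : MCS Γ) {ψ χ : Formula Ag} :
    and ψ χ ∈ Γ ↔ ψ ∈ Γ ∧ χ ∈ Γ := by
  constructor
  · intro h1
    exact ⟨mcs_mp h (mcs_prv_mem h (Prv.taut (taut_and_left ψ χ))) h1,
      mcs_mp h (mcs_prv_mem h (Prv.taut (taut_and_right ψ χ))) h1⟩
  · intro ⟨h1, h2⟩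
    exact mcs_mp h (mcs_mp h (mcs_prv_mem h (Prv.taut (taut_and_intro ψ χ))) h1) h2

/-- The uniform box case of the truth lemma.  The crucial point is that
necessitation is not needed: diamond saturation together with maximal
consistency forces the required closure properties. -/
lemma box_case {Ag : Type} [Fintype Ag] (X : Set (Set (Formula Ag)))
    (hmcs : ∀ Γ ∈ X, MCS Γ) (hsat : DiamondSaturated X)
    (α : BoxOp Ag)
    (hk : ∀ A B : Formula Ag,
      Prv (impl (α.apply (impl A B)) (impl (α.apply A) (α.apply B))))
    (φ : Formula Ag) (Γ : X)
    (ih : ∀ Δ : X, (canonicalModel Ag X).sat φ Δ ↔ φ ∈ Δ.1) :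
    (∀ Δ : X, canR α Γ.1 Δ.1 → (canonicalModel Ag X).sat φ Δ) ↔
      α.apply φ ∈ Γ.1 := by
  have hΓ := hmcs Γ.1 Γ.2
  constructor
  · intro H
    have h1 : α.dual (neg φ) ∉ Γ.1 := by
      intro h
      obtain ⟨Δ, hΔX, hR, hmem⟩ := hsat Γ.1 Γ.2 α (neg φ) h
      have hΔ := hmcs Δ hΔX
      exact mcs_not_pair hΔ ((ih ⟨Δ, hΔX⟩).1 (H ⟨Δ, hΔX⟩ hR)) hmem
    have h2 : α.apply (neg (neg φ)) ∈ Γ.1 :=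
      mcs_dneg hΓ (mcs_neg_of_not hΓ h1)
    have h3 : α.apply (impl (neg (neg φ)) φ) ∈ Γ.1 := by
      by_cases hz : α.dual (Formula.and (neg (neg φ)) (neg φ)) ∈ Γ.1
      · obtain ⟨Δ, hΔX, hR, hmem⟩ := hsat Γ.1 Γ.2 α _ hz
        have hΔ := hmcs Δ hΔX
        have h4 := (mcs_and_iff hΔ).1 hmem
        exact absurd (mcs_dneg hΔ h4.1) (fun hh => mcs_not_pair hΔ hh h4.2)
      · exact mcs_dneg hΓ (mcs_neg_of_not hΓ hz)
    exact mcs_mp hΓ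
      (mcs_mp hΓ (mcs_prv_mem hΓ (hk (neg (neg φ)) φ)) h3) h2
  · intro hm Δ hR
    exact (ih Δ).2 (hR φ hm)

end TruthAux

/-- **Truth lemma**: if `X` is a diamond saturated set of MCSs, then for every
`Γ ∈ X` and every formula `φ`: `M^dt|_X, Γ ⊨ φ` iff `φ ∈ Γ`. -/
theorem truth_lemma {Ag : Type} [Fintype Ag] [Nonempty Ag]
    (X : Set (Set (Formula Ag))) (hmcs : ∀ Γ ∈ X, MCS Γ)
    (hsat : DiamondSaturated X) (Γ : X) (φ : Formula Ag) :
    (canonicalModel Ag X).sat φ Γ ↔ φ ∈ Γ.1 := by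
  induction φ generalizing Γ with
  | var p => exact Iff.rfl
  | neg φ ih =>
    have hΓ := hmcs Γ.1 Γ.2
    show ¬ (canonicalModel Ag X).sat φ Γ ↔ _
    rw [ih Γ]
    exact ⟨mcs_neg_of_not hΓ, fun h2 h1 => mcs_not_pair hΓ h1 h2⟩
  | and φ ψ ihφ ihψ =>
    have hΓ := hmcs Γ.1 Γ.2
    show ((canonicalModel Ag X).sat φ Γ ∧ (canonicalModel Ag X).sat ψ Γ) ↔ _
    rw [ihφ Γ, ihψ Γ]
    exact (mcs_and_iff hΓ).symm
  | box φ ih =>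
    exact box_case X hmcs hsat BoxOp.box (fun A B => Prv.kBox A B) φ Γ ih
  | agent i φ ih =>
    exact box_case X hmcs hsat (BoxOp.agent i) (fun A B => Prv.kAg i A B) φ Γ ih
  | coal φ ih =>
    exact box_case X hmcs hsat BoxOp.coal (fun A B => Prv.kCoal A B) φ Γ ih
  | G φ ih =>
    exact box_case X hmcs hsat BoxOp.G (fun A B => Prv.kG A B) φ Γ ih
  | H φ ih =>
    exact box_case X hmcs hsat BoxOp.H (fun A B => Prv.kH A B) φ Γ ih
  | obl i φ ih =>
    exact box_case X hmcs hsat (BoxOp.obl i) (fun A B => Prv.a12 i A B) φ Γ ih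
end

section
/- Ought-implies-can (property D9) for the restricted canonical model: for every agent i ∈ Ag and every IRR-theory Γ, there exists an IRR-theory Δ such that R^dt_□ Γ Δ and for every IRR-theory Σ, if R^dt_[i] Δ Σ then R^dt_⊗i Γ Σ. -/
/-
A ⊗ᵢ-successor Δ of Γ already has the required properties: by A13, □φ → ⊗ᵢφ, so Δ is also a
□-successor of Γ; and by A16 together with axiom 4 for [i], ⊗ᵢξ → ⊗ᵢ[i]ξ, so every [i]-successor
of Δ is a ⊗ᵢ-successor of Γ. The work lies in finding such a Δ among the IRR-theories. It is
axiomatised by a descending chain θ₀ ← θ₁ ← … of formulas with ⊖ᵢθₙ ∈ Γ, where each step either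
decides one formula or settles one zigzag formula ζ, refuting it or adding a name for its innermost
world. A name is available because ⊖ᵢ(θ ∧ ζ) is itself a zigzag formula in Γ.
-/

namespace Formula

variable {Ag : Type}

@[simp] theorem evalProp_neg (v : Formula Ag → Bool) (φ : Formula Ag) :
    evalProp v (neg φ) = !evalProp v φ := rfl

@[simp] theorem evalProp_and (v : Formula Ag → Bool) (φ ψ : Formula Ag) :
    evalProp v (and φ ψ) = (evalProp v φ && evalProp v ψ) := rfl

@[simp] theorem evalProp_impl (v : Formula Ag → Bool) (φ ψ : Formula Ag) :
    evalProp v (impl φ ψ) = (!evalProp v φ || evalProp v ψ) := by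
  simp [impl]

@[simp] theorem evalProp_bot (v : Formula Ag → Bool) : evalProp v (bot : Formula Ag) = false := by
  simp [bot]

@[simp] theorem evalProp_verum (v : Formula Ag → Bool) :
    evalProp v (verum : Formula Ag) = true := by
  simp [verum]

@[simp] theorem evalProp_foldr_impl (v : Formula Ag → Bool) (ψ : Formula Ag)
    (l : List (Formula Ag)) :
    evalProp v (l.foldr impl ψ) = (!l.all (evalProp v) || evalProp v ψ) := by
  induction l with
  | nil => simp
  | cons a l ih => simp [ih, Bool.or_assoc]

instance : Inhabited (Formula Ag) := ⟨var 0⟩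

def encode (g : Ag → ℕ) : Formula Ag → ℕ
  | var n => Nat.pair 0 n
  | neg φ => Nat.pair 1 (encode g φ)
  | and φ ψ => Nat.pair 2 (Nat.pair (encode g φ) (encode g ψ))
  | box φ => Nat.pair 3 (encode g φ)
  | agent i φ => Nat.pair 4 (Nat.pair (g i) (encode g φ))
  | coal φ => Nat.pair 5 (encode g φ)
  | G φ => Nat.pair 6 (encode g φ)
  | H φ => Nat.pair 7 (encode g φ)
  | obl i φ => Nat.pair 8 (Nat.pair (g i) (encode g φ))

theorem encode_injective {g : Ag → ℕ} (hg : Function.Injective g) :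
    Function.Injective (encode g) := by
  intro φ ψ h
  induction φ generalizing ψ <;> cases ψ <;> simp_all [encode, Nat.pair_eq_pair] <;> aesop

instance [Countable Ag] : Countable (Formula Ag) :=
  let ⟨_, hg⟩ := exists_injective_nat Ag
  (encode_injective hg).countable

end Formula

open Formula

theorem BoxOp.apply_left_injective {Ag : Type} (φ : Formula Ag) :
    Function.Injective fun α : BoxOp Ag => α.apply φ := by
  intro α β h
  cases α <;> cases β <;> simp_all [BoxOp.apply]

instance {Ag : Type} [Countable Ag] : Countable (BoxOp Ag) :=
  (BoxOp.apply_left_injective (var 0)).countable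

theorem exists_seq_of_forall_exists {α T : Type*} [Countable T] [Nonempty T] {A : α → Prop}
    (r : α → α → Prop) (R : α → T → Prop) {a₀ : α} (h₀ : A a₀)
    (hstep : ∀ t a, A a → ∃ b, A b ∧ r b a ∧ R b t) :
    ∃ s : ℕ → α, s 0 = a₀ ∧ (∀ n, A (s n)) ∧ (∀ n, r (s (n + 1)) (s n)) ∧
      ∀ t, ∃ n, R (s n) t := by
  obtain ⟨e, he⟩ := exists_surjective_nat T
  choose f hfA hfr hfR using hstep
  let s : ℕ → {a // A a} := fun n =>
    Nat.rec ⟨a₀, h₀⟩ (fun k a => ⟨f (e k) a.1 a.2, hfA _ _ _⟩) n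
  refine ⟨fun n => (s n).1, rfl, fun n => (s n).2, fun n => hfr _ _ _, fun t => ?_⟩
  obtain ⟨n, rfl⟩ := he t
  exact ⟨n + 1, hfR _ _ _⟩

variable {Ag : Type} [Fintype Ag]

namespace Prv

theorem imp_trans {a b c : Formula Ag} (hab : Prv (impl a b)) (hbc : Prv (impl b c)) :
    Prv (impl a c) :=
  mp (mp (taut fun v => by simp; grind) hab) hbc

theorem agent_nec (i : Ag) {a : Formula Ag} (h : Prv a) : Prv (agent i a) :=
  mp (taut fun v => by simp; grind) (mp (a13 i a) (necBox h))

theorem obl_nec (i : Ag) {a : Formula Ag} (h : Prv a) : Prv (obl i a) :=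
  mp (taut fun v => by simp; grind) (mp (a13 i a) (necBox h))

theorem agent_mono (i : Ag) {a b : Formula Ag} (h : Prv (impl a b)) :
    Prv (impl (agent i a) (agent i b)) :=
  mp (kAg i a b) (agent_nec i h)

theorem obl_mono (i : Ag) {a b : Formula Ag} (h : Prv (impl a b)) :
    Prv (impl (obl i a) (obl i b)) :=
  mp (a12 i a b) (obl_nec i h)

theorem box_imp_obl (i : Ag) (a : Formula Ag) : Prv (impl (box a) (obl i a)) :=
  imp_trans (a13 i a) (taut fun v => by simp; grind)

theorem agent_four (i : Ag) (a : Formula Ag) :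
    Prv (impl (agent i a) (agent i (agent i a))) := by
  have elim_dn : Prv (impl (agent i (neg (neg a))) (agent i a)) :=
    agent_mono i (taut fun v => by simp)
  have intro_dn : Prv (impl (agent i a) (agent i (neg (neg a)))) :=
    agent_mono i (taut fun v => by simp)
  have neg_intro_dn : Prv (impl (neg (agent i (neg (neg a)))) (neg (agent i a))) :=
    mp (taut fun v => by simp; grind) intro_dn
  have collapse : Prv (impl (diamAg i (agent i a)) (agent i a)) :=
    mp (mp (mp (taut fun v => by simp [diamAg]; grind) elim_dn) (fiveAg i (neg a)))
      (agent_mono i neg_intro_dn)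
  exact imp_trans (imp_trans (mp (taut fun v => by simp [diamAg]; grind) (tAg i (neg (agent i a))))
    (fiveAg i (agent i a))) (agent_mono i collapse)

theorem obl_imp_obl_agent (i : Ag) (a : Formula Ag) :
    Prv (impl (obl i a) (obl i (agent i a))) :=
  mp (a16 i a (agent i a)) (necBox (agent_four i a))

theorem perm_verum (i : Ag) : Prv (perm i (verum : Formula Ag)) := by
  have h : Prv (box (neg (agent i (neg verum)))) :=
    necBox (mp (taut fun v => by simp) (tAg i (neg verum)))
  exact mp (mp (taut fun v => by simp [diam, perm]; grind) (a14 i (neg verum))) h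

end Prv

namespace SetProv

variable {Γ : Set (Formula Ag)} {a b : Formula Ag}

theorem of_prv (h : Prv a) : SetProv Γ a := ⟨[], by simp, h⟩

theorem of_mem (h : a ∈ Γ) : SetProv Γ a := ⟨[a], by simpa, Prv.taut fun v => by simp⟩

theorem mp (hab : SetProv Γ (impl a b)) (ha : SetProv Γ a) : SetProv Γ b := by
  obtain ⟨l₁, hl₁, h₁⟩ := hab
  obtain ⟨l₂, hl₂, h₂⟩ := ha
  refine ⟨l₁ ++ l₂, by simpa [or_imp, forall_and] using ⟨hl₁, hl₂⟩, ?_⟩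
  exact Prv.mp (Prv.mp (Prv.taut fun v => by simp; grind) h₁) h₂

theorem deduction (h : SetProv (insert a Γ) b) : SetProv Γ (impl a b) := by
  classical
  obtain ⟨l, hl, hb⟩ := h
  refine ⟨l.filter (· ≠ a), fun χ hχ => ?_, Prv.mp (Prv.taut fun v => ?_) hb⟩
  · obtain ⟨hχl, hχa⟩ := List.mem_filter.1 hχ
    exact (hl χ hχl).resolve_left (by simpa using hχa)
  · simp
    grind

end SetProv

namespace MCS

variable {Γ : Set (Formula Ag)} {a b c : Formula Ag}

theorem mem_of_setProv (hΓ : MCS Γ) (h : SetProv Γ a) : a ∈ Γ := by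
  by_contra ha
  exact hΓ.1 ((hΓ.2 _ (Set.ssubset_insert ha)).deduction.mp h)

theorem mem_of_prv (hΓ : MCS Γ) (h : Prv a) : a ∈ Γ :=
  hΓ.mem_of_setProv (.of_prv h)

theorem mem_of_imp (hΓ : MCS Γ) (h : Prv (impl a b)) (ha : a ∈ Γ) : b ∈ Γ :=
  hΓ.mem_of_setProv ((SetProv.of_prv h).mp (.of_mem ha))

theorem mem_of_imp₂ (hΓ : MCS Γ) (h : Prv (impl a (impl b c))) (ha : a ∈ Γ) (hb : b ∈ Γ) :
    c ∈ Γ :=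
  hΓ.mem_of_setProv (((SetProv.of_prv h).mp (.of_mem ha)).mp (.of_mem hb))

theorem neg_notMem (hΓ : MCS Γ) (ha : a ∈ Γ) : neg a ∉ Γ := fun hna =>
  hΓ.1 (((SetProv.of_prv (Prv.taut fun v => by simp)).mp (.of_mem ha)).mp (.of_mem hna))

theorem mem_or_neg_mem (hΓ : MCS Γ) (a : Formula Ag) : a ∈ Γ ∨ neg a ∈ Γ := by
  by_contra! h
  have h₁ := (hΓ.2 _ (Set.ssubset_insert h.1)).deduction
  have h₂ := (hΓ.2 _ (Set.ssubset_insert h.2)).deduction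
  exact hΓ.1 (((SetProv.of_prv (Prv.taut fun v => by simp)).mp h₁).mp h₂)

theorem mem_of_neg_notMem (hΓ : MCS Γ) (h : neg a ∉ Γ) : a ∈ Γ :=
  (hΓ.mem_or_neg_mem a).resolve_right h

theorem of_consistent_of_mem_or_neg_mem (hcon : ¬ SetProv Γ bot)
    (hcompl : ∀ a, a ∈ Γ ∨ neg a ∈ Γ) : MCS Γ := by
  refine ⟨hcon, fun Γ' hΓ' => ?_⟩
  obtain ⟨a, haΓ', haΓ⟩ := Set.exists_of_ssubset hΓ'
  have hna : neg a ∈ Γ' := hΓ'.1 ((hcompl a).resolve_left haΓ)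
  exact ((SetProv.of_prv (Prv.taut fun v => by simp)).mp (.of_mem haΓ')).mp (.of_mem hna)

theorem obl_mem_of_imp₂ (hΓ : MCS Γ) (i : Ag) (h : Prv (impl a (impl b c)))
    (ha : obl i a ∈ Γ) (hb : obl i b ∈ Γ) : obl i c ∈ Γ :=
  hΓ.mem_of_imp₂ (Prv.imp_trans (Prv.obl_mono i h) (Prv.a12 i b c)) ha hb

theorem perm_and_or_perm_and_neg (hΓ : MCS Γ) (i : Ag) (ha : perm i a ∈ Γ) (b : Formula Ag) :
    perm i (and a b) ∈ Γ ∨ perm i (and a (neg b)) ∈ Γ := by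
  by_contra! h
  have hb := hΓ.mem_of_neg_notMem h.1
  have hnb := hΓ.mem_of_neg_notMem h.2
  exact hΓ.neg_notMem (hΓ.obl_mem_of_imp₂ i (Prv.taut fun v => by simp; grind) hb hnb) ha

theorem not_prv_imp_neg (hΓ : MCS Γ) (i : Ag) (ha : perm i a ∈ Γ) (hb : obl i b ∈ Γ) :
    ¬ Prv (impl a (neg b)) := fun h =>
  hΓ.neg_notMem
    (hΓ.mem_of_imp (Prv.obl_mono i (Prv.mp (Prv.taut fun v => by simp; grind) h)) hb) ha

end MCS

def chainTheory (θ : ℕ → Formula Ag) : Set (Formula Ag) := {χ | ∃ n, Prv (impl (θ n) χ)}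

section chainTheory

variable {θ : ℕ → Formula Ag}

theorem prv_imp_of_le (hθ : ∀ n, Prv (impl (θ (n + 1)) (θ n))) {m n : ℕ} (h : m ≤ n) :
    Prv (impl (θ n) (θ m)) := by
  induction n, h using Nat.le_induction with
  | base => exact Prv.taut fun v => by simp
  | succ n _ ih => exact (hθ n).imp_trans ih

theorem mem_chainTheory_of_setProv (hθ : ∀ n, Prv (impl (θ (n + 1)) (θ n))) {ψ : Formula Ag}
    (h : SetProv (chainTheory θ) ψ) : ψ ∈ chainTheory θ := by
  obtain ⟨l, hl, hψ⟩ := h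
  suffices ∀ n, Prv (impl (θ n) (l.foldr impl ψ)) → ψ ∈ chainTheory θ from
    this 0 (Prv.mp (Prv.taut fun v => by simp; grind) hψ)
  clear hψ
  induction l with
  | nil => exact fun n h => ⟨n, h⟩
  | cons c l ih =>
    intro n hn
    obtain ⟨m, hm⟩ := hl c (by simp)
    refine ih (fun χ hχ => hl χ (by simp [hχ])) (max n m) ?_
    exact Prv.mp (Prv.mp (Prv.mp (Prv.taut fun v => by simp; grind)
      (prv_imp_of_le hθ (le_max_left n m))) hn)
      ((prv_imp_of_le hθ (le_max_right n m)).imp_trans hm)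

theorem chainTheory_mcs (hθ : ∀ n, Prv (impl (θ (n + 1)) (θ n)))
    (hcon : ∀ n, ¬ Prv (impl (θ n) bot))
    (hcompl : ∀ χ, ∃ n, Prv (impl (θ n) χ) ∨ Prv (impl (θ n) (neg χ))) :
    MCS (chainTheory θ) := by
  refine .of_consistent_of_mem_or_neg_mem (fun h => ?_) (fun χ => ?_)
  · obtain ⟨n, hn⟩ := mem_chainTheory_of_setProv hθ h
    exact hcon n hn
  · obtain ⟨n, hn | hn⟩ := hcompl χ
    exacts [.inl ⟨n, hn⟩, .inr ⟨n, hn⟩]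

theorem canR_obl_chainTheory {Γ : Set (Formula Ag)} (hΓ : MCS Γ) (i : Ag)
    (hθΓ : ∀ n, perm i (θ n) ∈ Γ) (hΔ : MCS (chainTheory θ)) :
    canR (BoxOp.obl i) Γ (chainTheory θ) := by
  intro ψ hψ
  refine (hΔ.mem_or_neg_mem ψ).resolve_right ?_
  rintro ⟨n, hn⟩
  exact hΓ.not_prv_imp_neg i (hθΓ n) hψ hn

end chainTheory

/-- The tasks of the chain construction: `.inl χ` asks to decide `χ`, and `.inr (l, α, φ)` asks
to refute the zigzag formula `zigzag l α φ` or to name its innermost world. -/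
def Settles (θ : Formula Ag) :
    Formula Ag ⊕ (List (BoxOp Ag × Formula Ag) × BoxOp Ag × Formula Ag) → Prop
  | .inl χ => Prv (impl θ χ) ∨ Prv (impl θ (neg χ))
  | .inr (l, α, φ) =>
    Prv (impl θ (neg (zigzag l α φ))) ∨ ∃ q, Prv (impl θ (zigzag l α (and φ (nameF q))))

namespace IRRTheory

variable {Γ : Set (Formula Ag)}

theorem exists_perm_settles (hΓ : IRRTheory Γ) (i : Ag) {θ : Formula Ag} (hθ : perm i θ ∈ Γ)
    (t : Formula Ag ⊕ (List (BoxOp Ag × Formula Ag) × BoxOp Ag × Formula Ag)) :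
    ∃ θ', perm i θ' ∈ Γ ∧ Prv (impl θ' θ) ∧ Settles θ' t := by
  have hfst (χ : Formula Ag) : Prv (impl (and θ χ) θ) := Prv.taut fun v => by simp; grind
  have hsnd (χ : Formula Ag) : Prv (impl (and θ χ) χ) := Prv.taut fun v => by simp; grind
  rcases t with χ | ⟨l, α, φ⟩
  · rcases hΓ.1.perm_and_or_perm_and_neg i hθ χ with h | h
    exacts [⟨_, h, hfst _, .inl (hsnd _)⟩, ⟨_, h, hfst _, .inr (hsnd _)⟩]
  · rcases hΓ.1.perm_and_or_perm_and_neg i hθ (zigzag l α φ) with h | h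
    · -- `h` is the zigzag formula `⊖ᵢ(θ ∧ zigzag l α φ)`, one step longer
      obtain ⟨q, hq⟩ := hΓ.2.2 ((BoxOp.obl i, θ) :: l) α φ h
      exact ⟨and θ (zigzag l α (and φ (nameF q))), hq, hfst _, .inr ⟨q, hsnd _⟩⟩
    · exact ⟨_, h, hfst _, .inl (hsnd _)⟩

theorem exists_canR_obl (hΓ : IRRTheory Γ) (i : Ag) :
    ∃ Δ, IRRTheory Δ ∧ canR (BoxOp.obl i) Γ Δ := by
  -- starting the chain at `⊤ ∧ name(q)` puts a name into `Δ`
  obtain ⟨q, hq⟩ := hΓ.2.2 [] (BoxOp.obl i) verum (hΓ.1.mem_of_prv (Prv.perm_verum i))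
  obtain ⟨θ, hθ₀, hθΓ, hθ, hsettles⟩ :=
    exists_seq_of_forall_exists (A := (perm i · ∈ Γ)) (fun a b => Prv (impl a b)) Settles hq
      (fun t _ hθ => hΓ.exists_perm_settles i hθ t)
  have hverum : obl i verum ∈ Γ := hΓ.1.mem_of_prv (Prv.obl_nec i (Prv.taut fun v => by simp))
  have hΔ : MCS (chainTheory θ) := chainTheory_mcs hθ
    (fun n h => hΓ.1.not_prv_imp_neg i (hθΓ n) hverum (h.imp_trans (Prv.taut fun v => by simp)))
    (fun χ => hsettles (.inl χ))
  refine ⟨chainTheory θ, ⟨hΔ, ⟨q, 0, hθ₀ ▸ Prv.taut fun v => by simp⟩, ?_⟩,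
    canR_obl_chainTheory hΓ.1 i hθΓ hΔ⟩
  intro l α φ hφ
  obtain ⟨n, hn | ⟨q, hq⟩⟩ := hsettles (.inr (l, α, φ))
  exacts [absurd ⟨n, hn⟩ (hΔ.neg_notMem hφ), ⟨q, n, hq⟩]

end IRRTheory

theorem canonical_D9_general {Ag : Type} [Fintype Ag]
    (i : Ag) (Γ : Set (Formula Ag)) (hΓ : IRRTheory Γ) :
    ∃ Δ : Set (Formula Ag), IRRTheory Δ ∧ canR BoxOp.box Γ Δ ∧
      ∀ S : Set (Formula Ag), IRRTheory S →
        canR (BoxOp.agent i) Δ S → canR (BoxOp.obl i) Γ S := by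
  obtain ⟨Δ, hΔ, hΓΔ⟩ := hΓ.exists_canR_obl i
  refine ⟨Δ, hΔ, fun φ hφ => hΓΔ φ ?_, fun S _ hΔS ξ hξ => hΔS ξ (hΓΔ _ ?_)⟩
  · exact hΓ.1.mem_of_imp (Prv.box_imp_obl i φ) hφ
  · exact hΓ.1.mem_of_imp (Prv.obl_imp_obl_agent i ξ) hξ

/-- **Ought-implies-can (D9) for the restricted canonical model**: for every
agent `i` and IRR-theory Γ there is an IRR-theory Δ with `R^dt_□ Γ Δ` such that
every IRR-theory Σ with `R^dt_[i] Δ Σ` satisfies `R^dt_⊗i Γ Σ`. -/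
theorem canonical_D9 {Ag : Type} [Fintype Ag] [Nonempty Ag]
    (i : Ag) (Γ : Set (Formula Ag)) (hΓ : IRRTheory Γ) :
    ∃ Δ : Set (Formula Ag), IRRTheory Δ ∧ canR BoxOp.box Γ Δ ∧
      ∀ S : Set (Formula Ag), IRRTheory S →
        canR (BoxOp.agent i) Δ S → canR (BoxOp.obl i) Γ S :=
  canonical_D9_general i Γ hΓ
end

section
/- Ideal choices are complete (property D11) for the restricted canonical model: for every agent i ∈ Ag and all IRR-theories Γ and Δ with R^dt_⊗i Γ Δ, there exists an IRR-theory Σ such that R^dt_□ Γ Σ, R^dt_[i] Σ Δ, and for every IRR-theory Π, if R^dt_[i] Σ Π then R^dt_⊗i Γ Π. -/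
set_option linter.unusedSectionVars false

section AuxD11

open Formula

variable {Ag : Type} [Fintype Ag]

private lemma taut_id (A : Formula Ag) : Tautology (Formula.impl A A) := by
  intro v
  simp only [Formula.impl, evalProp]
  cases evalProp v A <;> simp

private lemma taut_trans (A B C : Formula Ag) :
    Tautology (Formula.impl (Formula.impl A B) (Formula.impl (Formula.impl B C) (Formula.impl A C))) := by
  intro v
  simp only [Formula.impl, evalProp]
  cases evalProp v A <;> cases evalProp v B <;> cases evalProp v C <;> simp

private lemma taut_contra (A B : Formula Ag) :
    Tautology (Formula.impl (Formula.impl A B) (Formula.impl (neg B) (neg A))) := by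
  intro v
  simp only [Formula.impl, evalProp]
  cases evalProp v A <;> cases evalProp v B <;> simp

private lemma taut_dne (A : Formula Ag) : Tautology (Formula.impl (neg (neg A)) A) := by
  intro v
  simp only [Formula.impl, evalProp]
  cases evalProp v A <;> simp

private lemma taut_dni (A : Formula Ag) : Tautology (Formula.impl A (neg (neg A))) := by
  intro v
  simp only [Formula.impl, evalProp]
  cases evalProp v A <;> simp

private lemma taut_andl (A B : Formula Ag) : Tautology (Formula.impl (and A B) A) := by
  intro v
  simp only [Formula.impl, evalProp]
  cases evalProp v A <;> cases evalProp v B <;> simp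

private lemma taut_andr (A B : Formula Ag) : Tautology (Formula.impl (and A B) B) := by
  intro v
  simp only [Formula.impl, evalProp]
  cases evalProp v A <;> cases evalProp v B <;> simp

private lemma taut_subst (A B X Y : Formula Ag) :
    Tautology (Formula.impl (Formula.impl A B) (Formula.impl (Formula.impl X Y) (Formula.impl (Formula.impl B X) (Formula.impl A Y)))) := by
  intro v
  simp only [Formula.impl, evalProp]
  cases evalProp v A <;> cases evalProp v B <;> cases evalProp v X <;>
    cases evalProp v Y <;> simp

private lemma taut_mono (X Y C : Formula Ag) :
    Tautology (Formula.impl (Formula.impl X Y) (Formula.impl (Formula.impl C X) (Formula.impl C Y))) := by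
  intro v
  simp only [Formula.impl, evalProp]
  cases evalProp v C <;> cases evalProp v X <;> cases evalProp v Y <;> simp

private lemma prv_trans {A B C : Formula Ag} (h1 : Prv (Formula.impl A B)) (h2 : Prv (Formula.impl B C)) :
    Prv (Formula.impl A C) :=
  Prv.mp (Prv.mp (Prv.taut (taut_trans A B C)) h1) h2

private lemma prv_contra {A B : Formula Ag} (h : Prv (Formula.impl A B)) :
    Prv (Formula.impl (neg B) (neg A)) :=
  Prv.mp (Prv.taut (taut_contra A B)) h

/-- Necessitation for `[i]`, derived from necessitation for `□` and A13. -/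
private lemma necAg (i : Ag) {A : Formula Ag} (h : Prv A) : Prv (agent i A) :=
  Prv.mp (Prv.taut (taut_andl (agent i A) (obl i A)))
    (Prv.mp (Prv.a13 i A) (Prv.necBox h))

/-- Monotonicity for `[i]`. -/
private lemma monoAg (i : Ag) {A B : Formula Ag} (h : Prv (Formula.impl A B)) :
    Prv (Formula.impl (agent i A) (agent i B)) :=
  Prv.mp (Prv.kAg i A B) (necAg i h)

/-- `A → ⟨i⟩A`. -/
private lemma prv_tAgDual (i : Ag) (A : Formula Ag) : Prv (Formula.impl A (diamAg i A)) :=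
  prv_trans (Prv.taut (taut_dni A)) (prv_contra (Prv.tAg i (neg A)))

/-- The B schema for `[i]`: `A → [i]⟨i⟩A`. -/
private lemma prv_B (i : Ag) (A : Formula Ag) : Prv (Formula.impl A (agent i (diamAg i A))) :=
  prv_trans (prv_tAgDual i A) (Prv.fiveAg i A)

/-- `¬[i]A → [i]¬[i]A`. -/
private lemma prv_negbox5 (i : Ag) (A : Formula Ag) :
    Prv (Formula.impl (neg (agent i A)) (agent i (neg (agent i A)))) := by
  have s1 : Prv (Formula.impl (neg (agent i A)) (neg (agent i (neg (neg A))))) :=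
    prv_contra (monoAg i (Prv.taut (taut_dne A)))
  have s2 : Prv (Formula.impl (neg (agent i (neg (neg A))))
      (agent i (neg (agent i (neg (neg A)))))) := Prv.fiveAg i (neg A)
  have s3 : Prv (Formula.impl (agent i (neg (agent i (neg (neg A)))))
      (agent i (neg (agent i A)))) :=
    monoAg i (prv_contra (monoAg i (Prv.taut (taut_dni A))))
  exact prv_trans s1 (prv_trans s2 s3)

/-- `⟨i⟩[i]A → [i]A`. -/
private lemma prv_diamBox (i : Ag) (A : Formula Ag) :
    Prv (Formula.impl (diamAg i (agent i A)) (agent i A)) :=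
  prv_trans (prv_contra (prv_negbox5 i A)) (Prv.taut (taut_dne (agent i A)))

/-- The 4 schema for `[i]`: `[i]A → [i][i]A`. -/
private lemma prv_fourAg (i : Ag) (A : Formula Ag) :
    Prv (Formula.impl (agent i A) (agent i (agent i A))) :=
  prv_trans (prv_B i (agent i A)) (monoAg i (prv_diamBox i A))

/-- `⊗ᵢA → ⊗ᵢ[i]A`, from A16 and the 4 schema for `[i]`. -/
private lemma prv_oblFour (i : Ag) (A : Formula Ag) :
    Prv (Formula.impl (obl i A) (obl i (agent i A))) :=
  Prv.mp (Prv.a16 i A (agent i A)) (Prv.necBox (prv_fourAg i A))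

/-- `□A → ⊗ᵢA`, from A13. -/
private lemma prv_boxObl (i : Ag) (A : Formula Ag) :
    Prv (Formula.impl (box A) (obl i A)) :=
  prv_trans (Prv.a13 i A) (Prv.taut (taut_andr (agent i A) (obl i A)))

/-- Maximally consistent sets are closed under provable implications. -/
private lemma mcs_closed_s9 {Γ : Set (Formula Ag)} (hΓ : MCS Γ) {A B : Formula Ag}
    (hA : A ∈ Γ) (himp : Prv (Formula.impl A B)) : B ∈ Γ := by
  by_contra hB
  obtain ⟨l, hl, hp⟩ := hΓ.2 (insert B Γ) (Set.ssubset_insert hB)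
  classical
  set r : Formula Ag → Formula Ag := fun χ => if χ = B then A else χ with hr
  have key : ∀ m : List (Formula Ag),
      Prv (Formula.impl (m.foldr Formula.impl Formula.bot) ((m.map r).foldr Formula.impl Formula.bot)) := by
    intro m
    induction m with
    | nil => exact Prv.taut (taut_id _)
    | cons χ m ih =>
      by_cases hc : χ = B
      · subst hc
        simp only [List.map_cons, List.foldr_cons, hr, if_pos rfl]
        exact Prv.mp (Prv.mp (Prv.taut (taut_subst A χ _ _)) himp) ih
      · simp only [List.map_cons, List.foldr_cons, hr, if_neg hc]
        exact Prv.mp (Prv.taut (taut_mono _ _ χ)) ih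
  have hmem : ∀ χ ∈ l.map r, χ ∈ Γ := by
    intro χ hχ
    obtain ⟨a, ha, rfl⟩ := List.mem_map.1 hχ
    by_cases hc : a = B
    · simpa [hr, hc] using hA
    · have := hl a ha
      rcases Set.mem_insert_iff.1 this with h1 | h1
      · exact absurd h1 hc
      · simpa [hr, hc] using h1
  exact hΓ.1 ⟨l.map r, hmem, Prv.mp (key l) hp⟩

end AuxD11

/-- **Ideal choices are complete (D11) for the restricted canonical model**:
for every agent `i` and IRR-theories Γ, Δ with `R^dt_⊗i Γ Δ`, there is an
IRR-theory S with `R^dt_□ Γ S`, `R^dt_[i] S Δ`, and such that every IRR-theory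
P with `R^dt_[i] S P` satisfies `R^dt_⊗i Γ P`. -/
theorem canonical_D11 {Ag : Type} [Fintype Ag] [Nonempty Ag]
    (i : Ag) (Γ Δ : Set (Formula Ag)) (hΓ : IRRTheory Γ) (hΔ : IRRTheory Δ)
    (h : canR (BoxOp.obl i) Γ Δ) :
    ∃ S : Set (Formula Ag), IRRTheory S ∧ canR BoxOp.box Γ S ∧
      canR (BoxOp.agent i) S Δ ∧
      ∀ P : Set (Formula Ag), IRRTheory P →
        canR (BoxOp.agent i) S P → canR (BoxOp.obl i) Γ P := by
  refine ⟨Δ, hΔ, ?_, ?_, ?_⟩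
  · intro φ hbox
    exact h _ (mcs_closed_s9 hΓ.1 hbox (prv_boxObl i φ))
  · intro φ hag
    exact mcs_closed_s9 hΔ.1 hag (Prv.tAg i φ)
  · intro P _ hP φ hφ
    exact hP _ (h _ (mcs_closed_s9 hΓ.1 hφ (prv_oblFour i φ)))
end
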